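/- For σ > 0 and κ > 0, the normalized coupled Gaussian density satisfies the generalized-mean identity at the scale: f(σ) = (∫_{-∞}^∞ f(x)^{1+2κ/(1+κ)} dx)^{(1+κ)/(2κ)}, where f(x) = (√κ/(σ B(1/(2κ),1/2)))(1 + κ x²/σ²)^{-(1+κ)/(2κ)}. -/

import Mathlib

/-!
Write `f = C (1 + κ x²/σ²)^(-e)` with `e = (1 + κ)/(2κ)`; the exponent of the identity is
`p = 1 + 1/e`, so `f^p = C^p (1 + κ x²/σ²)^(-(e + 1))`. The substitution `t = x²/(1 + x²)` turns
`∫ (1 + x²)^(-s)` into the Beta integral `B(1/2, s - 1/2)`, and the recurrence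
`B(1/2, a + 1) = B(a, 1/2) · a/(a + 1/2)` at `a = 1/(2κ)` gives `∫ f^p = C^(1/e)/(1 + κ)`.
Raising to the power `e` yields `C (1 + κ)^(-e)`, which is `f σ`.
-/

open MeasureTheory Real

noncomputable def betaFn (a b : ℝ) : ℝ := Real.Gamma a * Real.Gamma b / Real.Gamma (a + b)

open Set

theorem betaFn_comm (a b : ℝ) : betaFn a b = betaFn b a := by
  rw [betaFn, betaFn, mul_comm, add_comm]

theorem betaFn_pos {a b : ℝ} (ha : 0 < a) (hb : 0 < b) : 0 < betaFn a b :=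
  ProbabilityTheory.beta_pos ha hb

theorem betaFn_add_one_right {a b : ℝ} (hb : b ≠ 0) (hab : a + b ≠ 0) :
    betaFn a (b + 1) = betaFn a b * (b / (a + b)) := by
  rw [betaFn, betaFn, ← add_assoc, Real.Gamma_add_one hb, Real.Gamma_add_one hab,
    mul_left_comm, mul_div_mul_comm, mul_comm]

theorem betaFn_eq_integral {a b : ℝ} (ha : 0 < a) (hb : 0 < b) :
    betaFn a b = ∫ x in (0:ℝ)..1, x ^ (a - 1) * (1 - x) ^ (b - 1) := by
  rw [show betaFn a b = ProbabilityTheory.beta a b from rfl,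
    ProbabilityTheory.beta_eq_betaIntegralReal a b ha hb, Complex.betaIntegral,
    ← Complex.reCLM_apply, ← ContinuousLinearMap.intervalIntegral_comp_comm _
      (Complex.betaIntegral_convergent (by simpa) (by simpa))]
  refine intervalIntegral.integral_congr fun x hx => ?_
  rw [uIcc_of_le zero_le_one] at hx
  rw [Complex.reCLM_apply, ← Complex.ofReal_one, ← Complex.ofReal_sub, ← Complex.ofReal_sub,
    ← Complex.ofReal_sub, ← Complex.ofReal_cpow hx.1, ← Complex.ofReal_cpow (sub_nonneg.2 hx.2),
    ← Complex.ofReal_mul, Complex.ofReal_re]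

theorem image_sq_div_one_add_sq_Ioi :
    (fun x : ℝ => x ^ 2 / (1 + x ^ 2)) '' Ioi 0 = Ioo 0 1 := by
  ext t
  constructor
  · rintro ⟨x, hx : 0 < x, rfl⟩
    exact ⟨by positivity, (div_lt_one (by positivity)).2 (by linarith)⟩
  · rintro ⟨ht0, ht1⟩
    have ht : 0 < t / (1 - t) := div_pos ht0 (by linarith)
    refine ⟨√(t / (1 - t)), sqrt_pos.2 ht, ?_⟩
    simp only [sq_sqrt ht.le]
    field_simp
    ring

theorem injOn_sq_div_one_add_sq_Ioi :
    InjOn (fun x : ℝ => x ^ 2 / (1 + x ^ 2)) (Ioi 0) := by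
  intro x (hx : 0 < x) y (hy : 0 < y) h
  field_simp at h
  nlinarith

theorem hasDerivAt_sq_div_one_add_sq (x : ℝ) :
    HasDerivAt (fun x : ℝ => x ^ 2 / (1 + x ^ 2)) (2 * x / (1 + x ^ 2) ^ 2) x := by
  refine ((hasDerivAt_pow 2 x).fun_div ((hasDerivAt_pow 2 x).const_add 1)
    (by positivity)).congr_deriv ?_
  norm_num
  ring

theorem deriv_mul_betaIntegrand_sq_div_one_add_sq {s x : ℝ} (hx : 0 < x) :
    2 * x / (1 + x ^ 2) ^ 2 *
      ((x ^ 2 / (1 + x ^ 2)) ^ ((1:ℝ) / 2 - 1) * (1 - x ^ 2 / (1 + x ^ 2)) ^ (s - 1 / 2 - 1)) =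
      2 * (1 + x ^ 2) ^ (-s) := by
  set u := 1 + x ^ 2
  have hu : 0 < u := by positivity
  have hx2 : (x ^ 2) ^ ((1:ℝ) / 2 - 1) = x⁻¹ := by
    rw [← rpow_natCast, ← rpow_mul hx.le]; norm_num [rpow_neg_one]
  have h1 : 1 - x ^ 2 / u = u⁻¹ := by field_simp; ring
  have hexp : -((1:ℝ) / 2 - 1) + -(s - 1 / 2 - 1) = 2 + -s := by ring
  rw [h1, div_rpow (by positivity) hu.le, hx2, inv_rpow hu.le, div_eq_mul_inv x⁻¹,
    ← rpow_neg hu.le, ← rpow_neg hu.le, mul_assoc x⁻¹, ← rpow_add hu, hexp, rpow_add hu,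
    rpow_two]
  field_simp

theorem integral_one_add_sq_rpow_neg {s : ℝ} (hs : 1 / 2 < s) :
    ∫ x : ℝ, (1 + x ^ 2) ^ (-s) = betaFn (1 / 2) (s - 1 / 2) := by
  calc ∫ x : ℝ, (1 + x ^ 2) ^ (-s)
      = 2 * ∫ x in Ioi 0, (1 + x ^ 2) ^ (-s) := by
        rw [← integral_comp_abs (f := fun x : ℝ => (1 + x ^ 2) ^ (-s))]
        simp only [sq_abs]
    _ = ∫ t in Ioo 0 1, t ^ ((1:ℝ) / 2 - 1) * (1 - t) ^ (s - 1 / 2 - 1) := by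
        rw [← image_sq_div_one_add_sq_Ioi, integral_image_eq_integral_abs_deriv_smul
          measurableSet_Ioi (fun x _ => (hasDerivAt_sq_div_one_add_sq x).hasDerivWithinAt)
          injOn_sq_div_one_add_sq_Ioi, ← integral_const_mul]
        refine setIntegral_congr_fun measurableSet_Ioi fun x (hx : 0 < x) => ?_
        rw [abs_of_pos (by positivity), smul_eq_mul,
          deriv_mul_betaIntegrand_sq_div_one_add_sq hx]
    _ = betaFn (1 / 2) (s - 1 / 2) := by
        rw [betaFn_eq_integral (by norm_num) (by linarith),
          intervalIntegral.integral_of_le zero_le_one, integral_Ioc_eq_integral_Ioo]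

theorem integral_one_add_mul_sq_rpow_neg {c s : ℝ} (hc : 0 < c) (hs : 1 / 2 < s) :
    ∫ x : ℝ, (1 + c * x ^ 2) ^ (-s) = betaFn (1 / 2) (s - 1 / 2) / √c := by
  have hsq : ∀ x : ℝ, c * x ^ 2 = (√c * x) ^ 2 := fun x => by rw [mul_pow, sq_sqrt hc.le]
  simp_rw [hsq]
  rw [Measure.integral_comp_mul_left (fun y => (1 + y ^ 2) ^ (-s)),
    integral_one_add_sq_rpow_neg hs, abs_inv, abs_of_pos (sqrt_pos.2 hc), smul_eq_mul,
    inv_mul_eq_div]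

theorem stmt_19 (σ κ : ℝ) (hσ : 0 < σ) (hκ : 0 < κ)
    (f : ℝ → ℝ)
    (hf : ∀ x, f x = (Real.sqrt κ / (σ * betaFn (1 / (2 * κ)) (1 / 2))) *
        (1 + κ * x ^ 2 / σ ^ 2) ^ (-(1 + κ) / (2 * κ))) :
    f σ = (∫ x : ℝ, f x ^ (1 + 2 * κ / (1 + κ))) ^ ((1 + κ) / (2 * κ)) := by
  set B := betaFn (1 / (2 * κ)) (1 / 2)
  set C := √κ / (σ * B)
  set e := (1 + κ) / (2 * κ)
  have hB : 0 < B := betaFn_pos (by positivity) one_half_pos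
  have hC : 0 < C := by positivity
  have he : 0 < e := by positivity
  have hpow : ∀ x, f x ^ (1 + e⁻¹) = C ^ (1 + e⁻¹) * (1 + κ / σ ^ 2 * x ^ 2) ^ (-(e + 1)) := by
    intro x
    rw [hf x, mul_rpow hC.le (by positivity), ← rpow_mul (by positivity), neg_div, neg_mul,
      mul_add, mul_one, mul_inv_cancel₀ he.ne', mul_div_right_comm]
  have hbeta : betaFn (1 / 2) (e + 1 - 1 / 2) = B / (1 + κ) := by
    rw [show e + 1 - 1 / 2 = 1 / (2 * κ) + 1 by simp only [e]; field_simp; ring,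
      betaFn_add_one_right (by positivity) (by positivity), betaFn_comm]
    field_simp
    ring
  have hint : ∫ x, f x ^ (1 + e⁻¹) = C ^ e⁻¹ / (1 + κ) := by
    simp_rw [hpow]
    rw [integral_const_mul, integral_one_add_mul_sq_rpow_neg (by positivity) (by linarith), hbeta,
      rpow_add hC, rpow_one, sqrt_div' _ (sq_nonneg σ), sqrt_sq hσ.le]
    simp only [C]
    field_simp
  have hexp : 1 + 2 * κ / (1 + κ) = 1 + e⁻¹ := by rw [inv_div]
  rw [hexp, hint, hf σ, mul_div_cancel_right₀ κ (by positivity), div_eq_mul_inv (C ^ e⁻¹),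
    mul_rpow (by positivity) (by positivity), ← rpow_mul hC.le, inv_mul_cancel₀ he.ne', rpow_one,
    inv_rpow (by positivity), ← rpow_neg (by positivity), neg_div]
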